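/- Let X be a Hilbert space, X_n Hilbert spaces with p_n ∈ L(X,X_n), ‖p_n u‖→‖u‖ for each u. Suppose A_n, T_n, B_n, K_n ∈ L(X_n) satisfy: ‖T_n‖, ‖T_n⁻¹‖, ‖B_n‖, ‖B_n⁻¹‖ ≤ C uniformly; B ∈ L(X) bijective; (K_n) compact (in the discrete approximation scheme sense); T_n and B_n asymptotically consistent to some T and B respectively; and A_n T_n = B_n + K_n. Then (A_n) is regular: any bounded sequence (u_n) with (A_n u_n) compact is itself compact. -/

import Mathlib

/-!
Put `v_n = T_n⁻¹ u_n`, so that `u_n = T_n v_n` and `A_n u_n = B_n v_n + K_n v_n`. The sequence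
`(v_n)` is bounded, hence `(K_n v_n)` is compact, and so is `B_n v_n = A_n u_n - K_n v_n`. If
`B_n v_n → a` along a subsequence, write `a = B z`; consistency of `(B_n)` together with the uniform
bound on `B_n⁻¹` gives `v_n → z`, and then consistency of `(T_n)` with the uniform bound on `T_n`
gives `u_n = T_n v_n → T z`.
-/

/-- A sequence `u_n ∈ X_n` is discretely compact: every subsequence has a subsubsequence
converging (in the sense `‖p_n u - u_n‖ → 0`) to some `u ∈ X`. -/
def DiscCompact {X : Type*} [NormedAddCommGroup X] [InnerProductSpace ℂ X]
    {Xn : ℕ → Type*} [∀ n, NormedAddCommGroup (Xn n)] [∀ n, InnerProductSpace ℂ (Xn n)]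
    (p : ∀ n, X →L[ℂ] Xn n) (u : ∀ n, Xn n) : Prop :=
  ∀ φ : ℕ → ℕ, StrictMono φ → ∃ ψ : ℕ → ℕ, StrictMono ψ ∧ ∃ v : X,
    Filter.Tendsto (fun k => ‖p (φ (ψ k)) v - u (φ (ψ k))‖) Filter.atTop (nhds 0)

/-- A sequence of operators `K_n ∈ L(X_n)` is discretely compact: it maps bounded
discrete sequences to discretely compact sequences. -/
def DiscCompactOp {X : Type*} [NormedAddCommGroup X] [InnerProductSpace ℂ X]
    {Xn : ℕ → Type*} [∀ n, NormedAddCommGroup (Xn n)] [∀ n, InnerProductSpace ℂ (Xn n)]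
    (p : ∀ n, X →L[ℂ] Xn n) (Kn : ∀ n, Xn n →L[ℂ] Xn n) : Prop :=
  ∀ (u : ∀ n, Xn n) (C : ℝ), (∀ n, ‖u n‖ ≤ C) → DiscCompact p (fun n => Kn n (u n))

open Filter Topology

def AsympConsistent {X : Type*} [NormedAddCommGroup X] [InnerProductSpace ℂ X]
    {Xn : ℕ → Type*} [∀ n, NormedAddCommGroup (Xn n)] [∀ n, InnerProductSpace ℂ (Xn n)]
    (p : ∀ n, X →L[ℂ] Xn n) (Tn : ∀ n, Xn n →L[ℂ] Xn n) (T : X →L[ℂ] X) : Prop :=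
  ∀ u : X, Tendsto (fun n => ‖Tn n (p n u) - p n (T u)‖) atTop (𝓝 0)

namespace DiscCompact

variable {X : Type*} [NormedAddCommGroup X] [InnerProductSpace ℂ X]
  {Xn : ℕ → Type*} [∀ n, NormedAddCommGroup (Xn n)] [∀ n, InnerProductSpace ℂ (Xn n)]
  {p : ∀ n, X →L[ℂ] Xn n}

theorem sub {u w : ∀ n, Xn n} (hu : DiscCompact p u) (hw : DiscCompact p w) :
    DiscCompact p (fun n => u n - w n) := by
  intro φ hφ
  obtain ⟨ψ₁, hψ₁, a, ha⟩ := hu φ hφ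
  obtain ⟨ψ₂, hψ₂, b, hb⟩ := hw (φ ∘ ψ₁) (hφ.comp hψ₁)
  refine ⟨ψ₁ ∘ ψ₂, hψ₁.comp hψ₂, a - b, ?_⟩
  have hsum := (ha.comp hψ₂.tendsto_atTop).add hb
  rw [add_zero] at hsum
  refine squeeze_zero (fun _ => norm_nonneg _) (fun k => ?_) hsum
  simp only [Function.comp_apply, map_sub]
  exact (congrArg norm (sub_sub_sub_comm _ _ _ _)).trans_le (norm_sub_le _ _)

theorem of_forall_norm_sub_le {u w : ∀ n, Xn n} (hw : DiscCompact p w) (f : X → X)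
    (e : X → ℕ → ℝ) (he : ∀ v, Tendsto (e v) atTop (𝓝 0)) (c : ℝ)
    (h : ∀ v n, ‖p n (f v) - u n‖ ≤ e v n + c * ‖p n v - w n‖) : DiscCompact p u := by
  intro φ hφ
  obtain ⟨ψ, hψ, v, hv⟩ := hw φ hφ
  refine ⟨ψ, hψ, f v, ?_⟩
  have hbound := ((he v).comp (hφ.comp hψ).tendsto_atTop).add (hv.const_mul c)
  rw [mul_zero, add_zero] at hbound
  exact squeeze_zero (fun _ => norm_nonneg _) (fun k => h v _) hbound

theorem map_of_asympConsistent {v : ∀ n, Xn n} (hv : DiscCompact p v)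
    {Tn : ∀ n, Xn n →L[ℂ] Xn n} {T : X →L[ℂ] X} {C : ℝ} (hTn : ∀ n, ‖Tn n‖ ≤ C)
    (hcons : AsympConsistent p Tn T) : DiscCompact p (fun n => Tn n (v n)) := by
  refine hv.of_forall_norm_sub_le T (fun z n => ‖Tn n (p n z) - p n (T z)‖) hcons C
    fun z n => ?_
  calc ‖p n (T z) - Tn n (v n)‖
      = ‖-(Tn n (p n z) - p n (T z)) + Tn n (p n z - v n)‖ := by
        rw [map_sub]; congr 1; abel
    _ ≤ ‖Tn n (p n z) - p n (T z)‖ + ‖Tn n (p n z - v n)‖ := by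
        rw [← norm_neg (Tn n (p n z) - p n (T z))]; exact norm_add_le _ _
    _ ≤ ‖Tn n (p n z) - p n (T z)‖ + C * ‖p n z - v n‖ := by
        gcongr; exact (Tn n).le_of_opNorm_le (hTn n) _

theorem of_map_of_asympConsistent {v : ∀ n, Xn n}
    {Bn SBn : ∀ n, Xn n →L[ℂ] Xn n} {B : X →L[ℂ] X} {C : ℝ}
    (hSBn : ∀ n, ‖SBn n‖ ≤ C)
    (hSB : ∀ n, (SBn n).comp (Bn n) = ContinuousLinearMap.id ℂ (Xn n))
    (hB : Function.Surjective B) (hcons : AsympConsistent p Bn B)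
    (hBv : DiscCompact p (fun n => Bn n (v n))) : DiscCompact p v := by
  have hC : 0 ≤ C := (norm_nonneg _).trans (hSBn 0)
  set z := Function.surjInv hB
  refine hBv.of_forall_norm_sub_le z (fun a n => C * ‖Bn n (p n (z a)) - p n (B (z a))‖)
    (fun a => by simpa using (hcons (z a)).const_mul C) C fun a n => ?_
  have hleft : SBn n (Bn n (p n (z a) - v n)) = p n (z a) - v n :=
    congrArg (fun f : Xn n →L[ℂ] Xn n => f (p n (z a) - v n)) (hSB n)
  calc ‖p n (z a) - v n‖
      = ‖SBn n (Bn n (p n (z a) - v n))‖ := by rw [hleft]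
    _ ≤ C * ‖Bn n (p n (z a) - v n)‖ := (SBn n).le_of_opNorm_le (hSBn n) _
    _ = C * ‖(Bn n (p n (z a)) - p n (B (z a))) + (p n a - Bn n (v n))‖ := by
        rw [Function.surjInv_eq hB, map_sub, sub_add_sub_cancel]
    _ ≤ C * ‖Bn n (p n (z a)) - p n (B (z a))‖ + C * ‖p n a - Bn n (v n)‖ := by
        rw [← mul_add]; gcongr; exact norm_add_le _ _

end DiscCompact

theorem stmt8_general {X : Type*} [NormedAddCommGroup X] [InnerProductSpace ℂ X]
    {Xn : ℕ → Type*} [∀ n, NormedAddCommGroup (Xn n)] [∀ n, InnerProductSpace ℂ (Xn n)]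
    (p : ∀ n, X →L[ℂ] Xn n)
    (An Tn Bn Kn STn SBn : ∀ n, Xn n →L[ℂ] Xn n) (C : ℝ)
    (hTn : ∀ n, ‖Tn n‖ ≤ C ∧ ‖STn n‖ ≤ C ∧
        (STn n).comp (Tn n) = ContinuousLinearMap.id ℂ (Xn n) ∧
        (Tn n).comp (STn n) = ContinuousLinearMap.id ℂ (Xn n))
    (hBn : ∀ n, ‖Bn n‖ ≤ C ∧ ‖SBn n‖ ≤ C ∧
        (SBn n).comp (Bn n) = ContinuousLinearMap.id ℂ (Xn n) ∧
        (Bn n).comp (SBn n) = ContinuousLinearMap.id ℂ (Xn n))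
    (T B : X →L[ℂ] X) (hB : Function.Bijective B)
    (hK : DiscCompactOp p Kn)
    (hconsT : ∀ u : X,
      Filter.Tendsto (fun n => ‖Tn n (p n u) - p n (T u)‖) Filter.atTop (nhds 0))
    (hconsB : ∀ u : X,
      Filter.Tendsto (fun n => ‖Bn n (p n u) - p n (B u)‖) Filter.atTop (nhds 0))
    (hATBK : ∀ n, (An n).comp (Tn n) = Bn n + Kn n) :
    ∀ (u : ∀ n, Xn n) (C' : ℝ), (∀ n, ‖u n‖ ≤ C') →
      DiscCompact p (fun n => An n (u n)) → DiscCompact p u := by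
  intro u C' hu hAu
  set v := fun n => STn n (u n)
  have hTv (n : ℕ) : Tn n (v n) = u n :=
    congrArg (fun f : Xn n →L[ℂ] Xn n => f (u n)) (hTn n).2.2.2
  have hv_bdd (n : ℕ) : ‖v n‖ ≤ C * C' :=
    (STn n).le_of_opNorm_le_of_le (hTn n).2.1 (hu n)
  have hAu_eq (n : ℕ) : An n (u n) = Bn n (v n) + Kn n (v n) := by
    rw [← hTv n]
    exact congrArg (fun f : Xn n →L[ℂ] Xn n => f (v n)) (hATBK n)
  have hBv : DiscCompact p (fun n => Bn n (v n)) := by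
    simpa only [hAu_eq, add_sub_cancel_right] using hAu.sub (hK v _ hv_bdd)
  have hv : DiscCompact p v :=
    hBv.of_map_of_asympConsistent (fun n => (hBn n).2.1) (fun n => (hBn n).2.2.1) hB.2 hconsB
  simpa only [hTv] using hv.map_of_asympConsistent (fun n => (hTn n).1) hconsT

/-- T-compatibility theorem: if `A_n T_n = B_n + K_n` with uniformly invertible `T_n, B_n`
asymptotically consistent to `T` and a bijective `B`, and `(K_n)` compact, then `(A_n)` is
regular. -/
theorem stmt8 {X : Type*} [NormedAddCommGroup X] [InnerProductSpace ℂ X] [CompleteSpace X]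
    {Xn : ℕ → Type*} [∀ n, NormedAddCommGroup (Xn n)] [∀ n, InnerProductSpace ℂ (Xn n)]
    [∀ n, CompleteSpace (Xn n)]
    (p : ∀ n, X →L[ℂ] Xn n)
    (hp : ∀ u : X, Filter.Tendsto (fun n => ‖p n u‖) Filter.atTop (nhds ‖u‖))
    (An Tn Bn Kn STn SBn : ∀ n, Xn n →L[ℂ] Xn n) (C : ℝ)
    (hTn : ∀ n, ‖Tn n‖ ≤ C ∧ ‖STn n‖ ≤ C ∧
        (STn n).comp (Tn n) = ContinuousLinearMap.id ℂ (Xn n) ∧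
        (Tn n).comp (STn n) = ContinuousLinearMap.id ℂ (Xn n))
    (hBn : ∀ n, ‖Bn n‖ ≤ C ∧ ‖SBn n‖ ≤ C ∧
        (SBn n).comp (Bn n) = ContinuousLinearMap.id ℂ (Xn n) ∧
        (Bn n).comp (SBn n) = ContinuousLinearMap.id ℂ (Xn n))
    (T B : X →L[ℂ] X) (hB : Function.Bijective B)
    (hK : DiscCompactOp p Kn)
    (hconsT : ∀ u : X,
      Filter.Tendsto (fun n => ‖Tn n (p n u) - p n (T u)‖) Filter.atTop (nhds 0))
    (hconsB : ∀ u : X,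
      Filter.Tendsto (fun n => ‖Bn n (p n u) - p n (B u)‖) Filter.atTop (nhds 0))
    (hATBK : ∀ n, (An n).comp (Tn n) = Bn n + Kn n) :
    ∀ (u : ∀ n, Xn n) (C' : ℝ), (∀ n, ‖u n‖ ≤ C') →
      DiscCompact p (fun n => An n (u n)) → DiscCompact p u :=
  stmt8_general p An Tn Bn Kn STn SBn C hTn hBn T B hB hK hconsT hconsB hATBK
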